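/- arXiv:2110.12182 — 2 statements merged into one kernel-verified Lean document; each statement's English description precedes it below -/
import Mathlib

section
/- If X = [x_1, ..., x_N] is a d×N complex matrix with unit-norm columns and N > d, then the maximum over i ≠ j of |x_i^H x_j| is at least sqrt((N-d)/(d(N-1))) (the Welch bound). -/
/-!
Let `G = Xᴴ X` be the Gram matrix of the columns and `F = X Xᴴ` the `d × d` frame operator.
Since `tr (G²) = tr (F²)`, both have the same Frobenius norm `S`. As `tr F = tr G = N` and `F`
has only `d` diagonal entries, Cauchy–Schwarz gives `N² ≤ d S`; on the other hand `G` has unit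
diagonal and off-diagonal entries of modulus at most `μ`, so `S ≤ N + N (N - 1) μ²`.
-/

namespace Matrix

variable {𝕜 : Type*} [RCLike 𝕜] {m n : Type*} [Fintype m] [Fintype n]

theorem trace_conjTranspose_mul_self_eq_sum_norm_sq (A : Matrix m n 𝕜) :
    (Aᴴ * A).trace = ∑ i, ∑ j, (‖A i j‖ ^ 2 : 𝕜) := by
  rw [Finset.sum_comm]
  simp only [trace, diag_apply, mul_apply, conjTranspose_apply, RCLike.star_def, RCLike.conj_mul]

theorem sum_norm_sq_conjTranspose_mul_self_eq_mul_conjTranspose_self (A : Matrix m n 𝕜) :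
    ∑ i, ∑ j, ‖(Aᴴ * A) i j‖ ^ 2 = ∑ i, ∑ j, ‖(A * Aᴴ) i j‖ ^ 2 := by
  have hcycle : ((Aᴴ * A)ᴴ * (Aᴴ * A)).trace = ((A * Aᴴ)ᴴ * (A * Aᴴ)).trace := by
    simp only [conjTranspose_mul, conjTranspose_conjTranspose, ← Matrix.mul_assoc]
    rw [trace_mul_comm]
    simp only [Matrix.mul_assoc]
  rw [trace_conjTranspose_mul_self_eq_sum_norm_sq,
    trace_conjTranspose_mul_self_eq_sum_norm_sq] at hcycle
  exact_mod_cast hcycle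

theorem sq_re_trace_le_card_mul_sum_norm_sq (B : Matrix n n 𝕜) :
    RCLike.re B.trace ^ 2 ≤ Fintype.card n * ∑ i, ∑ j, ‖B i j‖ ^ 2 := by
  have hdiag : ∀ i, RCLike.re (B i i) ^ 2 ≤ ∑ j, ‖B i j‖ ^ 2 := fun i =>
    calc RCLike.re (B i i) ^ 2 ≤ ‖B i i‖ ^ 2 := by
          rw [sq_le_sq, abs_norm]; exact RCLike.abs_re_le_norm _
      _ ≤ ∑ j, ‖B i j‖ ^ 2 :=
          Finset.single_le_sum (f := fun j => ‖B i j‖ ^ 2) (fun _ _ => by positivity)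
            (Finset.mem_univ i)
  calc RCLike.re B.trace ^ 2 = (∑ i, RCLike.re (B i i)) ^ 2 := by
        simp only [trace, diag_apply, map_sum]
    _ ≤ Fintype.card n * ∑ i, RCLike.re (B i i) ^ 2 := sq_sum_le_card_mul_sum_sq
    _ ≤ Fintype.card n * ∑ i, ∑ j, ‖B i j‖ ^ 2 := by gcongr with i; exact hdiag i

theorem sum_norm_sq_le_of_norm_diag_le_one_of_norm_offDiag_le (G : Matrix n n 𝕜) {μ : ℝ}
    (hdiag : ∀ i, ‖G i i‖ ≤ 1) (hoff : ∀ i j, i ≠ j → ‖G i j‖ ≤ μ) :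
    ∑ i, ∑ j, ‖G i j‖ ^ 2 ≤
      Fintype.card n + Fintype.card n * (Fintype.card n - 1) * μ ^ 2 := by
  classical
  have hrow : ∀ i, ∑ j, ‖G i j‖ ^ 2 ≤ 1 + (Fintype.card n - 1) * μ ^ 2 := by
    intro i
    rw [← Finset.add_sum_erase _ _ (Finset.mem_univ i)]
    have hoff_sum :
        ∑ j ∈ Finset.univ.erase i, ‖G i j‖ ^ 2 ≤ ∑ j ∈ Finset.univ.erase i, μ ^ 2 :=
      Finset.sum_le_sum fun j hj =>
        pow_le_pow_left₀ (norm_nonneg _) (hoff i j (Finset.ne_of_mem_erase hj).symm) 2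
    rw [Finset.sum_const, Finset.card_erase_of_mem (Finset.mem_univ i), nsmul_eq_mul,
      Finset.card_univ, Nat.cast_pred (Fintype.card_pos_iff.mpr ⟨i⟩)] at hoff_sum
    have hdiag_sq := pow_le_one₀ (norm_nonneg _) (hdiag i) (n := 2)
    linarith
  calc ∑ i, ∑ j, ‖G i j‖ ^ 2 ≤ ∑ _i : n, (1 + (Fintype.card n - 1) * μ ^ 2) :=
        Finset.sum_le_sum fun i _ => hrow i
    _ = _ := by simp only [Finset.sum_const, Finset.card_univ, nsmul_eq_mul]; ring

end Matrix

open Matrix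

theorem welch_bound_general (d N : ℕ) (hdN : d < N)
    (X : Matrix (Fin d) (Fin N) ℂ)
    (hunit : ∀ i : Fin N, star (fun k => X k i) ⬝ᵥ (fun k => X k i) = 1)
    (μ : ℝ)
    (hμ : ∀ i j : Fin N, i ≠ j →
      ‖star (fun k => X k i) ⬝ᵥ (fun k => X k j)‖ ≤ μ) :
    Real.sqrt (((N : ℝ) - d) / (d * ((N : ℝ) - 1))) ≤ μ := by
  have hgram : ∀ i j, (Xᴴ * X) i j = star (fun k => X k i) ⬝ᵥ (fun k => X k j) :=
    fun _ _ => rfl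
  have htrace : RCLike.re (X * Xᴴ).trace = N := by
    rw [trace_mul_comm]
    simp [trace, hgram, hunit]
  have hfrob : (N : ℝ) ^ 2 ≤ d * (N + N * (N - 1) * μ ^ 2) := by
    have hupper := sum_norm_sq_le_of_norm_diag_le_one_of_norm_offDiag_le (Xᴴ * X)
      (fun i => by rw [hgram, hunit, norm_one]) (fun i j hij => by rw [hgram]; exact hμ i j hij)
    have hlower := sq_re_trace_le_card_mul_sum_norm_sq (X * Xᴴ)
    rw [htrace, ← sum_norm_sq_conjTranspose_mul_self_eq_mul_conjTranspose_self] at hlower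
    simp only [Fintype.card_fin] at hlower hupper
    exact hlower.trans (by gcongr)
  have hd : 0 < d := Nat.pos_of_ne_zero fun hd0 => by subst hd0; simp at hfrob; omega
  have hμ0 : 0 ≤ μ := (norm_nonneg _).trans (hμ ⟨0, by omega⟩ ⟨1, by omega⟩ (by simp))
  have hN : (2 : ℝ) ≤ N := by exact_mod_cast (show 2 ≤ N by omega)
  have hd1 : (1 : ℝ) ≤ d := by exact_mod_cast hd
  rw [Real.sqrt_le_left hμ0, div_le_iff₀ (by nlinarith)]
  nlinarith

/-- Welch bound: for unit-norm columns with d < N, the maximal cross-correlation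
is at least sqrt((N-d)/(d(N-1))). -/
theorem welch_bound (d N : ℕ) (hd : 0 < d) (hdN : d < N)
    (X : Matrix (Fin d) (Fin N) ℂ)
    (hunit : ∀ i : Fin N, star (fun k => X k i) ⬝ᵥ (fun k => X k i) = 1)
    (μ : ℝ)
    (hμ : ∀ i j : Fin N, i ≠ j →
      ‖star (fun k => X k i) ⬝ᵥ (fun k => X k j)‖ ≤ μ) :
    Real.sqrt (((N : ℝ) - d) / (d * ((N : ℝ) - 1))) ≤ μ :=
  welch_bound_general d N hdN X hunit μ hμ
end

section
/- Let s be a solution of Θψ s = y where X = Θψ has unit-norm columns with mutual coherence μ(X). If ‖s‖₀ < (1/2)(1 + 1/μ(X)), then s is the unique sparsest solution: any s' with Θψ s' = y and ‖s'‖₀ ≤ ‖s‖₀ equals s. -/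
open Matrix

/-- Uniqueness of sparse solutions: if ‖s‖₀ < (1/2)(1 + 1/μ) for the mutual
coherence μ of the unit-norm-column matrix X, then any solution s' of X s' = y
with ‖s'‖₀ ≤ ‖s‖₀ equals s. -/
theorem stmt17 (d N : ℕ) (X : Matrix (Fin d) (Fin N) ℂ)
    (hunit : ∀ i : Fin N, star (fun k => X k i) ⬝ᵥ (fun k => X k i) = 1)
    (μ : ℝ) (hμpos : 0 < μ)
    (hμ : ∀ i j : Fin N, i ≠ j →
      ‖star (fun k => X k i) ⬝ᵥ (fun k => X k j)‖ ≤ μ)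
    (y : Fin d → ℂ) (s s' : Fin N → ℂ)
    (hs : X.mulVec s = y) (hs' : X.mulVec s' = y)
    (hsparse : ((Function.support s).ncard : ℝ) < (1 / 2) * (1 + 1 / μ))
    (hle : (Function.support s').ncard ≤ (Function.support s).ncard) :
    s' = s := by
  have hXv : X.mulVec (s' - s) = 0 := by
    rw [Matrix.mulVec_sub, hs, hs', sub_self]
  set v : Fin N → ℂ := s' - s with hvdef
  suffices hv0 : v = 0 by
    have : s' - s = 0 := hv0
    exact sub_eq_zero.mp this
  by_contra hne
  obtain ⟨i0, hi0⟩ := Function.ne_iff.mp hne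
  simp only [Pi.zero_apply] at hi0
  have hfin : (Function.support v).Finite := Set.toFinite _
  set T : Finset (Fin N) := hfin.toFinset with hTdef
  have hmemT : ∀ j, j ∈ T ↔ v j ≠ 0 := by
    intro j
    rw [hTdef, Set.Finite.mem_toFinset, Function.mem_support]
  have hi0T : i0 ∈ T := (hmemT i0).mpr hi0
  obtain ⟨i, hiT, hmax⟩ :=
    T.exists_max_image (fun j => ‖v j‖) ⟨i0, hi0T⟩
  have hvi : 0 < ‖v i‖ := norm_pos_iff.mpr ((hmemT i).mp hiT)
  -- Gram row at i applied to v is zero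
  have key : ∑ j, (star (fun k => X k i) ⬝ᵥ fun k => X k j) * v j = 0 := by
    have h1 : ∀ k, (∑ j, X k j * v j) = 0 := by
      intro k
      have := congrFun hXv k
      simpa [Matrix.mulVec, dotProduct] using this
    calc ∑ j, (star (fun k => X k i) ⬝ᵥ fun k => X k j) * v j
        = ∑ j, ∑ k, (starRingEnd ℂ) (X k i) * (X k j * v j) := by
          simp [dotProduct, Finset.sum_mul, mul_assoc]
      _ = ∑ k, (starRingEnd ℂ) (X k i) * (∑ j, X k j * v j) := by
          rw [Finset.sum_comm]; simp [Finset.mul_sum]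
      _ = 0 := by simp [h1]
  have hgi : (star (fun k => X k i) ⬝ᵥ fun k => X k i) = 1 := hunit i
  have hvi_eq : v i =
      -∑ j ∈ Finset.univ.erase i, (star (fun k => X k i) ⬝ᵥ fun k => X k j) * v j := by
    have hsplit : (star (fun k => X k i) ⬝ᵥ fun k => X k i) * v i +
        ∑ j ∈ Finset.univ.erase i, (star (fun k => X k i) ⬝ᵥ fun k => X k j) * v j = 0 := by
      rw [Finset.add_sum_erase Finset.univ
        (fun j => (star (fun k => X k i) ⬝ᵥ fun k => X k j) * v j) (Finset.mem_univ i)]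
      exact key
    rw [hgi, one_mul] at hsplit
    exact eq_neg_of_add_eq_zero_left hsplit
  -- bound |v i|
  have habs1 : ‖v i‖ ≤
      ∑ j ∈ Finset.univ.erase i,
        ‖(star (fun k => X k i) ⬝ᵥ fun k => X k j) * v j‖ := by
    rw [hvi_eq, norm_neg]
    exact norm_sum_le _ _
  have hrestrict : ∑ j ∈ Finset.univ.erase i,
        ‖(star (fun k => X k i) ⬝ᵥ fun k => X k j) * v j‖
      = ∑ j ∈ T.erase i,
        ‖(star (fun k => X k i) ⬝ᵥ fun k => X k j) * v j‖ := by
    refine (Finset.sum_subset (Finset.erase_subset_erase i (T.subset_univ)) ?_).symm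
    intro j hj hj'
    have hji : j ≠ i := (Finset.mem_erase.mp hj).1
    have : j ∉ T := fun hjT => hj' (Finset.mem_erase.mpr ⟨hji, hjT⟩)
    have hvj : v j = 0 := by
      by_contra h; exact this ((hmemT j).mpr h)
    simp [hvj]
  have hterm : ∀ j ∈ T.erase i,
      ‖(star (fun k => X k i) ⬝ᵥ fun k => X k j) * v j‖
        ≤ μ * ‖v i‖ := by
    intro j hj
    have hji : j ≠ i := (Finset.mem_erase.mp hj).1
    have hjT : j ∈ T := Finset.mem_of_mem_erase hj
    rw [norm_mul]
    exact mul_le_mul (hμ i j (Ne.symm hji)) (hmax j hjT)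
      (norm_nonneg _) (le_trans (norm_nonneg _) (hμ i j (Ne.symm hji)))
  have hsum2 : ∑ j ∈ T.erase i,
        ‖(star (fun k => X k i) ⬝ᵥ fun k => X k j) * v j‖
      ≤ (T.erase i).card * (μ * ‖v i‖) := by
    calc ∑ j ∈ T.erase i,
          ‖(star (fun k => X k i) ⬝ᵥ fun k => X k j) * v j‖
        ≤ ∑ _j ∈ T.erase i, μ * ‖v i‖ := Finset.sum_le_sum hterm
      _ = (T.erase i).card * (μ * ‖v i‖) := by
          rw [Finset.sum_const, nsmul_eq_mul]
  -- cardinality bound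
  have hsuppsub : Function.support v ⊆ Function.support s ∪ Function.support s' := by
    intro j hj
    by_contra h
    simp only [Set.mem_union, Function.mem_support] at h
    push_neg at h
    have : v j = 0 := by simp [hvdef, h.1, h.2]
    exact hj this
  have hcardv : T.card ≤ 2 * (Function.support s).ncard := by
    have h1 : T.card = (Function.support v).ncard :=
      (Set.ncard_eq_toFinset_card _ hfin).symm
    have h2 : (Function.support v).ncard ≤
        (Function.support s ∪ Function.support s').ncard :=
      Set.ncard_le_ncard hsuppsub (Set.toFinite _)
    have h3 : (Function.support s ∪ Function.support s').ncard ≤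
        (Function.support s).ncard + (Function.support s').ncard :=
      Set.ncard_union_le _ _
    omega
  have hTcardR : (T.card : ℝ) < 1 + 1 / μ := by
    have : (T.card : ℝ) ≤ 2 * ((Function.support s).ncard : ℝ) := by
      exact_mod_cast hcardv
    nlinarith
  have hT1 : 1 ≤ T.card := Finset.card_pos.mpr ⟨i, hiT⟩
  have hcarderase : ((T.erase i).card : ℝ) = (T.card : ℝ) - 1 := by
    rw [Finset.card_erase_of_mem hiT]
    rw [Nat.cast_sub hT1, Nat.cast_one]
  have hmul : μ * ((T.card : ℝ) - 1) < 1 := by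
    have h1 : (T.card : ℝ) - 1 < 1 / μ := by linarith
    have := (mul_lt_mul_iff_right₀ hμpos).mpr h1
    rwa [mul_one_div, div_self (ne_of_gt hμpos)] at this
  have hfinal : ‖v i‖ ≤
      ((T.card : ℝ) - 1) * (μ * ‖v i‖) := by
    rw [← hcarderase]
    exact le_trans habs1 (le_trans (le_of_eq hrestrict) hsum2)
  nlinarith [hvi, hmul, hfinal]
end
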